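/- For α > 0, n ≥ 0 and 0 ≤ j < 2^n: f_α((2j+1)/2^{n+1}) = (1/2)[f_α(j/2^n) + f_α((j+1)/2^n)] + 2^{-αn}. -/

import Mathlib

/-! Between consecutive half-integers the tent map is affine, and for every `k < n` the scaled
points `2^k x` for `x = j/2^n, (2j+1)/2^(n+1), (j+1)/2^n` lie in one such interval, so those terms
of the series are exactly averaged. For `k ≥ n + 1` all three terms vanish, the endpoint terms
vanish already at `k = n`, and the midpoint term at `k = n` is `2^{-αn} φ(j + 1/2) = 2^{-αn}`. -/

open Finset

/-- The tent map `φ(x) = 2 inf{|x-n| : n ∈ ℤ}`. -/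
noncomputable def tent (x : ℝ) : ℝ := 2 * ⨅ n : ℤ, |x - (n:ℝ)|

/-- `f_α(x) = ∑_{j=0}^∞ 2^{-αj} φ(2^j x)`. -/
noncomputable def takagi (α x : ℝ) : ℝ :=
  ∑' j : ℕ, (1 / (2:ℝ) ^ (α * (j:ℝ))) * tent ((2:ℝ) ^ (j:ℕ) * x)

lemma tent_eq_of_abs_sub_le {x : ℝ} (m : ℤ) (h : |x - m| ≤ 1 / 2) : tent x = 2 * |x - m| := by
  refine congrArg (2 * ·) (le_antisymm (ciInf_le ⟨0, ?_⟩ m) (le_ciInf fun z => ?_))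
  · rintro _ ⟨z, rfl⟩
    exact abs_nonneg _
  · rcases eq_or_ne z m with rfl | hzm
    · exact le_rfl
    · have h_one : (1 : ℝ) ≤ |(z : ℝ) - m| := by
        exact_mod_cast Int.one_le_abs (sub_ne_zero.mpr hzm)
      have h_tri : |(z : ℝ) - m| ≤ |(z : ℝ) - x| + |x - m| := abs_sub_le _ _ _
      linarith [abs_sub_comm (z : ℝ) x]

lemma tent_intCast (m : ℤ) : tent m = 0 := by
  simpa using tent_eq_of_abs_sub_le (x := m) m (by norm_num)

lemma tent_eq_of_le_of_le_add_half {x : ℝ} (m : ℤ) (h₁ : m ≤ x) (h₂ : x ≤ m + 1 / 2) :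
    tent x = 2 * (x - m) := by
  rw [tent_eq_of_abs_sub_le m (abs_le.2 ⟨by linarith, by linarith⟩), abs_of_nonneg (by linarith)]

lemma tent_eq_of_sub_half_le_of_le {x : ℝ} (m : ℤ) (h₁ : m - 1 / 2 ≤ x) (h₂ : x ≤ m) :
    tent x = 2 * (m - x) := by
  rw [tent_eq_of_abs_sub_le m (abs_le.2 ⟨by linarith, by linarith⟩), abs_of_nonpos (by linarith)]
  ring

lemma tent_midpoint (s : ℤ) {a b : ℝ} (ha : s / 2 ≤ a) (hab : a ≤ b) (hb : b ≤ (s + 1) / 2) :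
    tent ((a + b) / 2) = (tent a + tent b) / 2 := by
  obtain ⟨m, rfl | rfl⟩ := Int.even_or_odd' s
  · push_cast at ha hb
    rw [tent_eq_of_le_of_le_add_half m (by linarith) (by linarith),
      tent_eq_of_le_of_le_add_half m (by linarith) (by linarith),
      tent_eq_of_le_of_le_add_half m (by linarith) (by linarith)]
    ring
  · push_cast at ha hb
    rw [tent_eq_of_sub_half_le_of_le (m + 1) (by push_cast; linarith) (by push_cast; linarith),
      tent_eq_of_sub_half_le_of_le (m + 1) (by push_cast; linarith) (by push_cast; linarith),
      tent_eq_of_sub_half_le_of_le (m + 1) (by push_cast; linarith) (by push_cast; linarith)]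
    ring

lemma tent_dyadic_midpoint (j : ℤ) (m : ℕ) :
    tent ((2 * j + 1) / 2 ^ (m + 2))
      = (tent (j / 2 ^ (m + 1)) + tent ((j + 1) / 2 ^ (m + 1))) / 2 := by
  set q := j / 2 ^ m
  have h_pow : (0 : ℤ) < 2 ^ m := by positivity
  have hq_le : (q : ℝ) * 2 ^ m ≤ j := by exact_mod_cast Int.ediv_mul_le j h_pow.ne'
  have hq_lt : (j : ℝ) + 1 ≤ (q + 1) * 2 ^ m := by
    exact_mod_cast Int.lt_ediv_add_one_mul_self j h_pow
  have h_pos : (0 : ℝ) < 2 ^ m := by positivity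
  have h_mid := tent_midpoint q (a := j / 2 ^ (m + 1)) (b := (j + 1) / 2 ^ (m + 1))
    (by rw [pow_succ, ← div_div, div_le_div_iff_of_pos_right two_pos, le_div_iff₀ h_pos]
        exact hq_le)
    (by gcongr; linarith)
    (by rw [pow_succ, ← div_div, div_le_div_iff_of_pos_right two_pos, div_le_iff₀ h_pos]
        exact hq_lt)
  rw [← h_mid]
  congr 1
  field_simp
  ring

lemma two_pow_mul_div_two_pow_add (x : ℝ) (k m : ℕ) : 2 ^ k * (x / 2 ^ (k + m)) = x / 2 ^ m := by
  rw [pow_add]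
  field_simp

lemma takagi_eq_sum_range (α : ℝ) (i : ℤ) (n : ℕ) :
    takagi α (i / 2 ^ n) = ∑ k ∈ range n, 1 / (2 : ℝ) ^ (α * k) * tent (2 ^ k * (i / 2 ^ n)) := by
  refine tsum_eq_sum fun k hk => ?_
  obtain ⟨t, rfl⟩ := Nat.exists_eq_add_of_le (not_lt.1 (mem_range.not.1 hk))
  have h_int : (2 : ℝ) ^ (n + t) * (i / 2 ^ n) = (i * 2 ^ t : ℤ) := by
    push_cast
    rw [pow_add]
    field_simp
  rw [h_int, tent_intCast, mul_zero]

theorem takagi_midpoint_general (α : ℝ) (n j : ℕ) :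
    takagi α ((2 * (j:ℝ) + 1) / 2 ^ (n + 1))
      = (1 / 2) * (takagi α ((j:ℝ) / 2 ^ n) + takagi α (((j:ℝ) + 1) / 2 ^ n))
        + 1 / (2:ℝ) ^ (α * (n:ℝ)) := by
  have h_mid := takagi_eq_sum_range α (2 * j + 1) (n + 1)
  have h_left := takagi_eq_sum_range α j n
  have h_right := takagi_eq_sum_range α (j + 1) n
  push_cast at h_mid h_left h_right
  have h_top : tent (2 ^ n * ((2 * j + 1) / 2 ^ (n + 1))) = 1 := by
    have h_half : (2 : ℝ) ^ n * ((2 * j + 1) / 2 ^ (n + 1)) = j + 1 / 2 := by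
      rw [pow_succ]
      field_simp
    rw [h_half, tent_eq_of_le_of_le_add_half j (by simp) (by simp)]
    push_cast
    ring
  rw [h_mid, h_left, h_right, sum_range_succ, h_top, mul_one, mul_add, mul_sum, mul_sum,
    ← sum_add_distrib]
  congr 1
  refine sum_congr rfl fun k hk => ?_
  obtain ⟨m, rfl⟩ := Nat.exists_eq_add_of_lt (mem_range.1 hk)
  rw [show k + m + 1 + 1 = k + (m + 2) by ring, show k + m + 1 = k + (m + 1) by ring,
    two_pow_mul_div_two_pow_add, two_pow_mul_div_two_pow_add, two_pow_mul_div_two_pow_add]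
  have h_avg := tent_dyadic_midpoint j m
  push_cast at h_avg
  rw [h_avg]
  ring

theorem takagi_midpoint (α : ℝ) (hα : 0 < α) (n j : ℕ) (hj : j < 2 ^ n) :
    takagi α ((2 * (j:ℝ) + 1) / 2 ^ (n + 1))
      = (1 / 2) * (takagi α ((j:ℝ) / 2 ^ n) + takagi α (((j:ℝ) + 1) / 2 ^ n))
        + 1 / (2:ℝ) ^ (α * (n:ℝ)) :=
  takagi_midpoint_general α n j
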